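/- Let γ : [0, T] → ℍ̄ be a curve in the closed upper half-plane parameterized by half-plane capacity, i.e. hcap(γ[0,t]) = 2t, and suppose γ is the graph of x ↦ e^{−1/x} near 0 (so γ(t) lies on {x + i·e^{−1/x} : x ∈ (0,1]} with γ(0⁺) → 0). If there is a universal constant c with 2t = hcap γ[0,t] ≤ c · height(γ[0,t]) · diam(γ[0,t]), then γ is not Hölder continuous of any exponent at t = 0. -/

import Mathlib

/-!
A Hölder bound at 0 gives `x t ≤ C tᵅ`, so the capacity bound `t/2 ≤ c e^{-1/x t} x t` forces
`t ≤ 2c·exp(-1/(C tᵅ))`. Since `e^{-1/x}` is flat at 0, the right side is `o(t)` as `t → 0⁺`.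
-/

open Filter Topology Real Set

theorem tendsto_exp_neg_inv_mul_rpow_div_nhdsGT_zero {C α : ℝ} (hC : 0 < C) (hα : 0 < α) :
    Tendsto (fun t => exp (-1 / (C * t ^ α)) / t) (𝓝[>] 0) (𝓝 0) := by
  -- `log (exp (-1 / (C * t ^ α)) / t)`, factored so that the leading `t ^ (-α)` dominates
  have hexponent : Tendsto (fun t => t ^ (-α) * (-(1 / C) - log t * t ^ α)) (𝓝[>] 0) atBot := by
    refine (tendsto_rpow_neg_nhdsGT_zero (neg_lt_zero.2 hα)).atTop_mul_neg
      (neg_lt_zero.2 (one_div_pos.2 hC)) ?_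
    simpa using (tendsto_log_mul_rpow_nhdsGT_zero hα).const_sub (-(1 / C))
  refine (tendsto_exp_atBot.comp hexponent).congr' ?_
  filter_upwards [self_mem_nhdsWithin] with t (ht : 0 < t)
  have htα : 0 < t ^ α := rpow_pos_of_pos ht α
  rw [Function.comp_apply, rpow_neg ht.le, mul_sub, ← mul_assoc, mul_comm _ (log t), mul_assoc,
    inv_mul_cancel₀ htα.ne', mul_one, sub_eq_add_neg, exp_add, exp_neg, exp_log ht, div_eq_mul_inv]
  congr 2
  field_simp

theorem stmt_7_general (T c : ℝ) (hT : 0 < T) (hc : 0 < c) (γ : ℝ → ℂ) (x : ℝ → ℝ)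
    (hx : ∀ t ∈ Set.Ioc (0:ℝ) T, 0 < x t ∧ x t ≤ 1)
    (hγ : ∀ t ∈ Set.Ioc (0:ℝ) T,
      γ t = (x t : ℂ) + (Real.exp (-1 / x t) : ℝ) * Complex.I)
    (hγ0 : γ 0 = 0)
    (hcap : ∀ t ∈ Set.Ioc (0:ℝ) T, t / 2 ≤ c * Real.exp (-1 / x t) * x t) :
    ¬ ∃ (α C : ℝ), 0 < α ∧ 0 ≤ C ∧
        ∀ t ∈ Set.Icc (0:ℝ) T, ‖γ t - γ 0‖ ≤ C * t ^ α := by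
  rintro ⟨α, C, hα, -, hHolder⟩
  have hx_le : ∀ t ∈ Ioc 0 T, x t ≤ C * t ^ α := fun t ht => by
    have h := hHolder t (Ioc_subset_Icc_self ht)
    rw [hγ t ht, hγ0, sub_zero] at h
    simpa [-Complex.ofReal_exp] using (Complex.re_le_norm _).trans h
  have hC : 0 < C := by
    have hT' : T ∈ Ioc 0 T := ⟨hT, le_rfl⟩
    have := (hx T hT').1.trans_le (hx_le T hT')
    exact pos_of_mul_pos_left this (rpow_pos_of_pos hT α).le
  obtain ⟨t, hsmall, ht⟩ :=
    ((tendsto_exp_neg_inv_mul_rpow_div_nhdsGT_zero hC hα).eventually_lt_const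
      (one_div_pos.2 (mul_pos two_pos hc)) |>.and (Ioc_mem_nhdsGT hT)).exists
  have hflat : t / 2 ≤ c * exp (-1 / (C * t ^ α)) := calc
    t / 2 ≤ c * exp (-1 / x t) * x t := hcap t ht
    _ ≤ c * exp (-1 / x t) := mul_le_of_le_one_right (by positivity) (hx t ht).2
    _ ≤ c * exp (-1 / (C * t ^ α)) := by
      gcongr c * exp ?_
      rw [neg_div, neg_div, neg_le_neg_iff]
      exact one_div_le_one_div_of_le (hx t ht).1 (hx_le t ht)
  rw [div_lt_div_iff₀ ht.1 (by positivity)] at hsmall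
  linarith

theorem stmt_7 (T c : ℝ) (hT : 0 < T) (hc : 0 < c) (γ : ℝ → ℂ) (x : ℝ → ℝ)
    (hx : ∀ t ∈ Set.Ioc (0:ℝ) T, 0 < x t ∧ x t ≤ 1)
    (hγ : ∀ t ∈ Set.Ioc (0:ℝ) T,
      γ t = (x t : ℂ) + (Real.exp (-1 / x t) : ℝ) * Complex.I)
    (hγ0 : γ 0 = 0)
    (hx0 : Filter.Tendsto x (nhdsWithin 0 (Set.Ioi 0)) (nhds 0))
    (hcap : ∀ t ∈ Set.Ioc (0:ℝ) T, t / 2 ≤ c * Real.exp (-1 / x t) * x t) :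
    ¬ ∃ (α C : ℝ), 0 < α ∧ 0 ≤ C ∧
        ∀ t ∈ Set.Icc (0:ℝ) T, ‖γ t - γ 0‖ ≤ C * t ^ α :=
  stmt_7_general T c hT hc γ x hx hγ hγ0 hcap
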